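/- Let I, L ⊆ Π and let w ∈ W satisfy w⁻¹(Φ_L) ∩ Φ_I = ∅. Then w(Φ⁺ \ Φ_I) ∩ Φ_L is a closed subset of Φ_L whose union with its negative is a partition of Φ_L, and there exists a unique w' ∈ W_L such that w'(w(Φ⁺ \ Φ_I) ∩ Φ_L) = Φ_L⁺. -/

import Mathlib

variable {V : Type*} [NormedAddCommGroup V] [InnerProductSpace ℝ V]

/-- `Φ` is a finite reduced crystallographic root system spanning `V`. -/
structure IsRootSystem (Φ : Set V) : Prop where
  finite : Φ.Finite
  zero_not_mem : (0 : V) ∉ Φ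
  span_top : Submodule.span ℝ Φ = ⊤
  reduced : ∀ α ∈ Φ, ∀ c : ℝ, c • α ∈ Φ → c = 1 ∨ c = -1
  crystallographic : ∀ α ∈ Φ, ∀ β ∈ Φ,
    ∃ n : ℤ, 2 * (inner ℝ β α : ℝ) / (inner ℝ α α : ℝ) = (n : ℝ)
  reflect_mem : ∀ α ∈ Φ, ∀ β ∈ Φ,
    β - (2 * (inner ℝ β α : ℝ) / (inner ℝ α α : ℝ)) • α ∈ Φ

/-- `α` is a nonnegative linear combination of elements of `Δ`. -/
def IsNonnegComb (Δ : Set V) (α : V) : Prop :=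
  ∃ c : V →₀ ℝ, (c.support : Set V) ⊆ Δ ∧ (∀ v, 0 ≤ c v) ∧ α = c.sum fun v r => r • v

/-- `Δ` is a base (set of simple roots) of the root system `Φ`. -/
structure IsBase (Φ Δ : Set V) : Prop where
  subset : Δ ⊆ Φ
  indep : LinearIndependent ℝ (Subtype.val : Δ → V)
  pos_or_neg : ∀ α ∈ Φ, IsNonnegComb Δ α ∨ IsNonnegComb Δ (-α)

/-- The set of positive roots with respect to the base `Δ`. -/
def posRoots (Φ Δ : Set V) : Set V := {α ∈ Φ | IsNonnegComb Δ α}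

/-- The set of negative roots with respect to the base `Δ`. -/
def negRoots (Φ Δ : Set V) : Set V := {α ∈ Φ | IsNonnegComb Δ (-α)}

/-- `Φ_A := Φ ∩ span A`. -/
def rootsIn (Φ A : Set V) : Set V := Φ ∩ (Submodule.span ℝ A : Set V)

/-- `Φ_A⁺`. -/
def posRootsIn (Φ Δ A : Set V) : Set V := rootsIn Φ A ∩ posRoots Φ Δ

/-- `Φ_A⁻`. -/
def negRootsIn (Φ Δ A : Set V) : Set V := rootsIn Φ A ∩ negRoots Φ Δ

/-- `Γ` is a closed subset of `Φ`. -/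
def IsClosedSubset (Φ Γ : Set V) : Prop := ∀ α ∈ Γ, ∀ β ∈ Γ, α + β ∈ Φ → α + β ∈ Γ

/-- `X` and `Y` are orthogonal sets of vectors. -/
def OrthogonalSets (X Y : Set V) : Prop := ∀ α ∈ X, ∀ β ∈ Y, (inner ℝ α β : ℝ) = 0

/-- The group generated by the reflections `s α`, `α ∈ A`. -/
def weylGroupOf (A : Set V) (s : V → V ≃ₗ[ℝ] V) : Subgroup (V ≃ₗ[ℝ] V) :=
  Subgroup.closure (s '' A)

/-- `s α` is the orthogonal reflection in the root `α`, for every `α ∈ Φ`. -/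
def IsReflectionFamily (Φ : Set V) (s : V → V ≃ₗ[ℝ] V) : Prop :=
  ∀ α ∈ Φ, ∀ x : V, s α x = x - (2 * (inner ℝ x α : ℝ) / (inner ℝ α α : ℝ)) • α


/-!
Since `w⁻¹(Φ_L)` misses `Φ_I`, the set `C = w(Φ⁺ \ Φ_I) ∩ Φ_L` equals `w(Φ⁺) ∩ Φ_L`, the trace on
`Φ_L` of the positive system `w(Φ⁺)` of `Φ`; this gives closedness and the partition.

If `C` contains a negative root, then it contains `-α` for some simple `α ∈ L` (look at a root of
minimal height in `Φ_L⁺ ∩ -C`). As `s_α` permutes `Φ⁺ \ {α}`, the positive system `s_α(C)` has one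
negative root fewer, and induction produces `w' ∈ W_L` with `w'(C) = Φ_L⁺`.

For uniqueness, an element `u = s_{a₁} ⋯ s_{aₖ}` of `W_L` mapping every `aᵢ` to a positive root is
trivial: `u(aₖ) > 0` forces some tail `s_{aⱼ₊₁} ⋯ s_{aₖ₋₁}` to send `aₖ` to `aⱼ`, so `s_{aⱼ}` and
`s_{aₖ}` cancel and the word gets shorter.
-/

open scoped Pointwise InnerProductSpace

namespace IsRootSystem

variable {Φ : Set V}

theorem inner_self_pos (hΦ : IsRootSystem Φ) {α : V} (hα : α ∈ Φ) : 0 < ⟪α, α⟫_ℝ :=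
  real_inner_self_pos.2 fun h => hΦ.zero_not_mem (h ▸ hα)

theorem neg_mem (hΦ : IsRootSystem Φ) {α : V} (hα : α ∈ Φ) : -α ∈ Φ := by
  have h := hΦ.reflect_mem α hα α hα
  rwa [mul_div_assoc, div_self (hΦ.inner_self_pos hα).ne', mul_one, two_smul,
    sub_add_cancel_left] at h

/-- The Cartan integers `m = 2⟪β, α⟫/⟪α, α⟫` and `n = 2⟪α, β⟫/⟪β, β⟫` are positive. If `m = 1`
or `n = 1`, then `β - α` is `s_α β` or `-s_β α`; otherwise `⟪β, α⟫ ≥ ⟪α, α⟫, ⟪β, β⟫` forces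
`‖β - α‖² ≤ 0`. -/
theorem sub_mem_of_inner_pos (hΦ : IsRootSystem Φ) {α β : V} (hα : α ∈ Φ) (hβ : β ∈ Φ)
    (hpos : 0 < ⟪β, α⟫_ℝ) (hne : β ≠ α) : β - α ∈ Φ := by
  obtain ⟨m, hm⟩ := hΦ.crystallographic α hα β hβ
  obtain ⟨n, hn⟩ := hΦ.crystallographic β hβ α hα
  have hA := hΦ.inner_self_pos hα
  have hB := hΦ.inner_self_pos hβ
  have two_le : ∀ k : ℤ, (0 : ℝ) < k → (k : ℝ) ≠ 1 → (2 : ℝ) ≤ k := fun k h0 h1 => by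
    have : (0 : ℤ) < k := by exact_mod_cast h0
    have : k ≠ 1 := by exact_mod_cast h1
    exact_mod_cast (by omega : (2 : ℤ) ≤ k)
  by_cases hm1 : (m : ℝ) = 1
  · have h := hΦ.reflect_mem α hα β hβ
    rwa [hm, hm1, one_smul] at h
  by_cases hn1 : (n : ℝ) = 1
  · have h := hΦ.neg_mem (hΦ.reflect_mem β hβ α hα)
    rwa [hn, hn1, one_smul, neg_sub] at h
  rw [real_inner_comm] at hn
  have hm2 := two_le m (hm ▸ by positivity) hm1
  have hn2 := two_le n (hn ▸ by positivity) hn1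
  rw [← hm, le_div_iff₀ hA] at hm2
  rw [← hn, le_div_iff₀ hB] at hn2
  have : ⟪β - α, β - α⟫_ℝ ≤ 0 := by rw [real_inner_sub_sub_self]; linarith
  exact absurd (sub_eq_zero.1 (real_inner_self_nonpos.1 this)) hne

theorem neg_posRoots (hΦ : IsRootSystem Φ) (Δ : Set V) : -posRoots Φ Δ = negRoots Φ Δ := by
  ext x
  exact ⟨fun h => ⟨neg_neg x ▸ hΦ.neg_mem h.1, h.2⟩, fun h => ⟨hΦ.neg_mem h.1, h.2⟩⟩

theorem neg_mem_rootsIn (hΦ : IsRootSystem Φ) {A : Set V} {x : V} (hx : x ∈ rootsIn Φ A) :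
    -x ∈ rootsIn Φ A :=
  ⟨hΦ.neg_mem hx.1, Submodule.neg_mem _ hx.2⟩

theorem neg_rootsIn (hΦ : IsRootSystem Φ) (A : Set V) : -rootsIn Φ A = rootsIn Φ A :=
  Set.Subset.antisymm (fun x hx => neg_neg x ▸ hΦ.neg_mem_rootsIn hx) fun _ => hΦ.neg_mem_rootsIn

end IsRootSystem

namespace IsNonnegComb

variable {Δ : Set V}

theorem add {x y : V} (hx : IsNonnegComb Δ x) (hy : IsNonnegComb Δ y) :
    IsNonnegComb Δ (x + y) := by
  obtain ⟨c, hcΔ, hc, rfl⟩ := hx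
  obtain ⟨d, hdΔ, hd, rfl⟩ := hy
  exact ⟨c + d, (Finsupp.supported ℝ ℝ Δ).add_mem hcΔ hdΔ,
    fun v => add_nonneg (hc v) (hd v), (map_add (Finsupp.linearCombination ℝ id) c d).symm⟩

theorem of_mem {α : V} (hα : α ∈ Δ) : IsNonnegComb Δ α :=
  ⟨Finsupp.single α 1, (Finset.coe_subset.2 Finsupp.support_single_subset).trans (by simpa),
    fun v => Finsupp.single_nonneg.2 zero_le_one v, by simp⟩

end IsNonnegComb

namespace IsBase

variable {Φ Δ : Set V}

theorem eq_of_sum_eq (hΔ : IsBase Φ Δ) {c d : V →₀ ℝ} (hc : (c.support : Set V) ⊆ Δ)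
    (hd : (d.support : Set V) ⊆ Δ)
    (h : (c.sum fun v r => r • v) = d.sum fun v r => r • v) : c = d :=
  linearIndepOn_iffₛ.1 (linearIndependent_subtype_iff.1 hΔ.indep) c hc d hd h

theorem support_subset_of_sum_add_sum_eq (hΔ : IsBase Φ Δ) {c e d : V →₀ ℝ}
    (hcΔ : (c.support : Set V) ⊆ Δ) (heΔ : (e.support : Set V) ⊆ Δ)
    (hdΔ : (d.support : Set V) ⊆ Δ) (hc : ∀ v, 0 ≤ c v) (he : ∀ v, 0 ≤ e v)
    (h : ((c.sum fun v r => r • v) + e.sum fun v r => r • v) = d.sum fun v r => r • v) :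
    c.support ⊆ d.support := by
  have hce : c + e = d :=
    hΔ.eq_of_sum_eq ((Finsupp.supported ℝ ℝ Δ).add_mem hcΔ heΔ) hdΔ
      ((map_add (Finsupp.linearCombination ℝ id) c e).trans h)
  intro v hv
  rw [← hce, Finsupp.mem_support_iff, Finsupp.add_apply]
  exact (lt_add_of_lt_of_nonneg ((hc v).lt_of_ne' (Finsupp.mem_support_iff.1 hv)) (he v)).ne'

theorem mem_posRoots_or_mem_negRoots (hΔ : IsBase Φ Δ) {α : V} (hα : α ∈ Φ) :
    α ∈ posRoots Φ Δ ∨ α ∈ negRoots Φ Δ :=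
  (hΔ.pos_or_neg α hα).imp (⟨hα, ·⟩) (⟨hα, ·⟩)

theorem disjoint_posRoots_negRoots (hΔ : IsBase Φ Δ) (hΦ : IsRootSystem Φ) :
    Disjoint (posRoots Φ Δ) (negRoots Φ Δ) := by
  refine Set.disjoint_left.2 fun x ⟨hxΦ, c, hcΔ, hc, hx⟩ ⟨_, e, heΔ, he, hx'⟩ => ?_
  have hsupp := hΔ.support_subset_of_sum_add_sum_eq hcΔ heΔ (d := 0) (by simp) hc he
    (by rw [← hx, ← hx', add_neg_cancel, Finsupp.sum_zero_index])
  rw [Finsupp.support_zero, Finset.subset_empty, Finsupp.support_eq_empty] at hsupp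
  rw [hx, hsupp, Finsupp.sum_zero_index] at hxΦ
  exact hΦ.zero_not_mem hxΦ

/-- The coefficients of `β` and of `k • α - β` are nonnegative and add up to those of `k • α`,
so `β` is a nonnegative multiple of `α`. -/
theorem eq_of_sub_smul_mem_negRoots (hΔ : IsBase Φ Δ) (hΦ : IsRootSystem Φ) {α β : V} (k : ℝ)
    (hα : α ∈ Δ) (hβ : β ∈ posRoots Φ Δ) (h : β - k • α ∈ negRoots Φ Δ) : β = α := by
  obtain ⟨hβΦ, c, hcΔ, hc, hβc⟩ := hβ
  obtain ⟨e, heΔ, he, he'⟩ := h.2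
  have hsingle : ((Finsupp.single α k).support : Set V) ⊆ Δ :=
    (Finset.coe_subset.2 Finsupp.support_single_subset).trans (by simpa)
  have hsupp := hΔ.support_subset_of_sum_add_sum_eq hcΔ heΔ hsingle hc he
    (by rw [← hβc, ← he', Finsupp.sum_single_index (zero_smul ℝ α)]; abel)
  obtain ⟨b, rfl⟩ :=
    Finsupp.support_subset_singleton'.1 (hsupp.trans Finsupp.support_single_subset)
  rw [Finsupp.sum_single_index (zero_smul ℝ α)] at hβc
  have hb : 0 ≤ b := by simpa using hc α
  rcases hΦ.reduced α (hΔ.subset hα) b (hβc ▸ hβΦ) with rfl | rfl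
  · rwa [one_smul] at hβc
  · norm_num at hb

theorem mem_posRoots (hΔ : IsBase Φ Δ) {α : V} (hα : α ∈ Δ) : α ∈ posRoots Φ Δ :=
  ⟨hΔ.subset hα, .of_mem hα⟩

theorem mem_posRootsIn (hΔ : IsBase Φ Δ) {L : Set V} (hL : L ⊆ Δ) {α : V} (hα : α ∈ L) :
    α ∈ posRootsIn Φ Δ L :=
  ⟨⟨hΔ.subset (hL hα), Submodule.subset_span hα⟩, hΔ.mem_posRoots (hL hα)⟩

theorem isNonnegComb_of_mem_span (hΔ : IsBase Φ Δ) {L : Set V} (hL : L ⊆ Δ) {β : V}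
    (hβ : IsNonnegComb Δ β) (hspan : β ∈ Submodule.span ℝ L) : IsNonnegComb L β := by
  obtain ⟨c, hcΔ, hc, rfl⟩ := hβ
  obtain ⟨d, hdL, hd⟩ := Submodule.mem_span_set.1 hspan
  obtain rfl := hΔ.eq_of_sum_eq hcΔ (hdL.trans hL) hd.symm
  exact ⟨c, hdL, hc, rfl⟩

theorem exists_height (hΔ : IsBase Φ Δ) : ∃ f : V →ₗ[ℝ] ℝ, ∀ v ∈ Δ, f v = 1 := by
  have hli := linearIndependent_subtype_iff.1 hΔ.indep
  refine ⟨(Module.Basis.extend hli).sumCoords, fun v hv => ?_⟩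
  have := (Module.Basis.extend hli).sumCoords_self_apply (i := ⟨v, hli.subset_extend _ hv⟩)
  rwa [Module.Basis.extend_apply_self] at this

end IsBase

namespace IsReflectionFamily

variable {Φ Δ : Set V} {s : V → V ≃ₗ[ℝ] V}

theorem apply_self (hs : IsReflectionFamily Φ s) (hΦ : IsRootSystem Φ) {α : V} (hα : α ∈ Φ) :
    s α α = -α := by
  rw [hs α hα α, mul_div_assoc, div_self (hΦ.inner_self_pos hα).ne', mul_one, two_smul,
    sub_add_cancel_left]

theorem involutive (hs : IsReflectionFamily Φ s) (hΦ : IsRootSystem Φ) {α : V} (hα : α ∈ Φ) :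
    Function.Involutive (s α) := fun x => by
  have hA := (hΦ.inner_self_pos hα).ne'
  have hcoeff : 2 * (⟪x, α⟫_ℝ - 2 * ⟪x, α⟫_ℝ / ⟪α, α⟫_ℝ * ⟪α, α⟫_ℝ) / ⟪α, α⟫_ℝ =
      -(2 * ⟪x, α⟫_ℝ / ⟪α, α⟫_ℝ) := by
    field_simp
    ring
  rw [hs α hα (s α x), hs α hα x, inner_sub_left, real_inner_smul_left, hcoeff, neg_smul,
    sub_neg_eq_add, sub_add_cancel]

theorem mul_self (hs : IsReflectionFamily Φ s) (hΦ : IsRootSystem Φ) {α : V} (hα : α ∈ Φ) :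
    s α * s α = 1 :=
  LinearEquiv.ext (hs.involutive hΦ hα)

theorem inv_eq (hs : IsReflectionFamily Φ s) (hΦ : IsRootSystem Φ) {α : V} (hα : α ∈ Φ) :
    (s α)⁻¹ = s α :=
  inv_eq_of_mul_eq_one_right (hs.mul_self hΦ hα)

theorem inner_apply_apply (hs : IsReflectionFamily Φ s) (hΦ : IsRootSystem Φ) {α : V}
    (hα : α ∈ Φ) (x y : V) : ⟪s α x, s α y⟫_ℝ = ⟪x, y⟫_ℝ := by
  have hA := (hΦ.inner_self_pos hα).ne'
  rw [hs α hα x, hs α hα y, inner_sub_left, inner_sub_right, inner_sub_right,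
    real_inner_smul_left, real_inner_smul_left, real_inner_smul_right, real_inner_smul_right,
    real_inner_comm α y]
  field_simp
  ring

theorem mapsTo_roots (hs : IsReflectionFamily Φ s) (hΦ : IsRootSystem Φ) {α : V} (hα : α ∈ Φ) :
    Set.MapsTo (s α) Φ Φ := fun β hβ => by
  rw [hs α hα β]
  exact hΦ.reflect_mem α hα β hβ

theorem mapsTo_span (hs : IsReflectionFamily Φ s) {α : V} (hα : α ∈ Φ) {A : Set V}
    (hαA : α ∈ Submodule.span ℝ A) :
    Set.MapsTo (s α) (Submodule.span ℝ A) (Submodule.span ℝ A) := fun x hx => by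
  rw [SetLike.mem_coe, hs α hα x]
  exact sub_mem hx (Submodule.smul_mem _ _ hαA)

theorem image_eq_of_mapsTo (hs : IsReflectionFamily Φ s) (hΦ : IsRootSystem Φ) {α : V}
    (hα : α ∈ Φ) {X : Set V} (h : Set.MapsTo (s α) X X) : s α '' X = X :=
  h.image_subset.antisymm fun x hx => ⟨s α x, h hx, hs.involutive hΦ hα x⟩

theorem image_roots (hs : IsReflectionFamily Φ s) (hΦ : IsRootSystem Φ) {α : V} (hα : α ∈ Φ) :
    s α '' Φ = Φ :=
  hs.image_eq_of_mapsTo hΦ hα (hs.mapsTo_roots hΦ hα)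

theorem image_rootsIn (hs : IsReflectionFamily Φ s) (hΦ : IsRootSystem Φ) {A : Set V} {α : V}
    (hα : α ∈ rootsIn Φ A) : s α '' rootsIn Φ A = rootsIn Φ A :=
  hs.image_eq_of_mapsTo hΦ hα.1
    ((hs.mapsTo_roots hΦ hα.1).inter_inter (hs.mapsTo_span hα.1 hα.2))

theorem apply_mem_posRoots (hs : IsReflectionFamily Φ s) (hΦ : IsRootSystem Φ)
    (hΔ : IsBase Φ Δ) {α β : V} (hα : α ∈ Δ) (hβ : β ∈ posRoots Φ Δ) (hne : β ≠ α) :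
    s α β ∈ posRoots Φ Δ := by
  refine (hΔ.mem_posRoots_or_mem_negRoots
    (hs.mapsTo_roots hΦ (hΔ.subset hα) hβ.1)).resolve_right fun hneg => hne ?_
  rw [hs α (hΔ.subset hα)] at hneg
  exact hΔ.eq_of_sub_smul_mem_negRoots hΦ _ hα hβ hneg

theorem conj (hs : IsReflectionFamily Φ s) {g : V ≃ₗ[ℝ] V}
    (hg : ∀ x y, ⟪g x, g y⟫_ℝ = ⟪x, y⟫_ℝ) {α : V} (hα : α ∈ Φ) (hgα : g α ∈ Φ) :
    g * s α * g⁻¹ = s (g α) := by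
  ext x
  change g (s α (g.symm x)) = s (g α) x
  rw [hs α hα, hs (g α) hgα, map_sub, map_smul, ← hg (g.symm x) α, ← hg α α,
    g.apply_symm_apply]

end IsReflectionFamily

theorem LinearEquiv.image_mul (g h : V ≃ₗ[ℝ] V) (X : Set V) : ⇑(g * h) '' X = g '' (h '' X) :=
  Set.image_comp g h X

section WeylGroup

variable {Φ A : Set V} {s : V → V ≃ₗ[ℝ] V}

theorem weylGroupOf_induction (hΦ : IsRootSystem Φ) (hs : IsReflectionFamily Φ s) (hA : A ⊆ Φ)
    {p : (V ≃ₗ[ℝ] V) → Prop} (mem : ∀ α ∈ A, p (s α)) (one : p 1)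
    (mul : ∀ g h, p g → p h → p (g * h)) {g : V ≃ₗ[ℝ] V} (hg : g ∈ weylGroupOf A s) : p g := by
  induction hg using Subgroup.closure_induction'' with
  | mem _ h => obtain ⟨α, hα, rfl⟩ := h; exact mem α hα
  | inv_mem _ h => obtain ⟨α, hα, rfl⟩ := h; rw [hs.inv_eq hΦ (hA hα)]; exact mem α hα
  | one => exact one
  | mul g h _ _ hg hh => exact mul g h hg hh

theorem exists_list_of_mem_weylGroupOf (hΦ : IsRootSystem Φ) (hs : IsReflectionFamily Φ s)
    (hA : A ⊆ Φ) {g : V ≃ₗ[ℝ] V} (hg : g ∈ weylGroupOf A s) :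
    ∃ l : List V, (∀ α ∈ l, α ∈ A) ∧ (l.map s).prod = g := by
  refine weylGroupOf_induction hΦ hs hA
    (p := fun g => ∃ l : List V, (∀ α ∈ l, α ∈ A) ∧ (l.map s).prod = g)
    (fun α hα => ⟨[α], by simpa, by simp⟩) ⟨[], by simp, rfl⟩ ?_ hg
  rintro _ _ ⟨l₁, hl₁, rfl⟩ ⟨l₂, hl₂, rfl⟩
  exact ⟨l₁ ++ l₂, fun α hα => (List.mem_append.1 hα).elim (hl₁ α) (hl₂ α), by simp⟩

theorem list_prod_mem_weylGroupOf {l : List V} (hl : ∀ α ∈ l, α ∈ A) :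
    (l.map s).prod ∈ weylGroupOf A s :=
  list_prod_mem (List.forall_mem_map.2 fun α hα => Subgroup.subset_closure ⟨α, hl α hα, rfl⟩)

theorem image_roots_of_mem_weylGroupOf (hΦ : IsRootSystem Φ) (hs : IsReflectionFamily Φ s)
    (hA : A ⊆ Φ) {g : V ≃ₗ[ℝ] V} (hg : g ∈ weylGroupOf A s) : g '' Φ = Φ := by
  refine weylGroupOf_induction hΦ hs hA (p := fun g : V ≃ₗ[ℝ] V => g '' Φ = Φ)
    (fun α hα => hs.image_roots hΦ (hA hα))
    (by simp) (fun g h hg hh => ?_) hg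
  rw [LinearEquiv.image_mul, hh, hg]

theorem inner_map_map_of_mem_weylGroupOf (hΦ : IsRootSystem Φ) (hs : IsReflectionFamily Φ s)
    (hA : A ⊆ Φ) {g : V ≃ₗ[ℝ] V} (hg : g ∈ weylGroupOf A s) (x y : V) :
    ⟪g x, g y⟫_ℝ = ⟪x, y⟫_ℝ := by
  refine weylGroupOf_induction hΦ hs hA (p := fun g => ∀ x y, ⟪g x, g y⟫_ℝ = ⟪x, y⟫_ℝ)
    (fun α hα => hs.inner_apply_apply hΦ (hA hα)) (fun _ _ => rfl)
    (fun g h hg hh x y => ?_) hg x y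
  rw [LinearEquiv.mul_apply, LinearEquiv.mul_apply, hg, hh]

end WeylGroup

section PositiveSystem

variable {M : Type*} [NormedAddCommGroup M]

/-- Bourbaki's characterisation of a positive system of `R`: closed, with `R = P ⊔ -P`. -/
structure IsPositiveSystem (R P : Set M) : Prop where
  closed : IsClosedSubset R P
  union_neg : P ∪ -P = R
  inter_neg : P ∩ -P = ∅

namespace IsPositiveSystem

variable {R P : Set M}

theorem subset (hP : IsPositiveSystem R P) : P ⊆ R :=
  hP.union_neg ▸ Set.subset_union_left

theorem mem_or_neg_mem (hP : IsPositiveSystem R P) {γ : M} (hγ : γ ∈ R) : γ ∈ P ∨ -γ ∈ P := by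
  rwa [← hP.union_neg] at hγ

theorem neg_notMem (hP : IsPositiveSystem R P) {γ : M} (hγ : γ ∈ P) : -γ ∉ P := fun h =>
  (hP.inter_neg ▸ (⟨hγ, h⟩ : γ ∈ P ∩ -P) : γ ∈ (∅ : Set M))

theorem eq_of_subset {Q : Set M} (hP : IsPositiveSystem R P) (hQ : IsPositiveSystem R Q)
    (h : P ⊆ Q) : P = Q :=
  h.antisymm fun _ hγ => (hP.mem_or_neg_mem (hQ.subset hγ)).resolve_right
    fun hneg => hQ.neg_notMem hγ (h hneg)

theorem inter {R' : Set M} (hP : IsPositiveSystem R P) (hR' : R' ⊆ R) (hneg : -R' = R') :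
    IsPositiveSystem R' (P ∩ R') where
  closed α hα β hβ hαβ := ⟨hP.closed α hα.1 β hβ.1 (hR' hαβ), hαβ⟩
  union_neg := by
    refine Set.Subset.antisymm (Set.union_subset Set.inter_subset_right fun γ hγ => ?_)
      fun γ hγ => (hP.mem_or_neg_mem (hR' hγ)).imp (⟨·, hγ⟩) (⟨·, ?_⟩)
    · exact hneg ▸ hγ.2
    · rw [← hneg] at hγ
      exact hγ
  inter_neg := Set.subset_empty_iff.1 <| hP.inter_neg ▸
    Set.inter_subset_inter Set.inter_subset_left fun _ h => h.1

theorem image {F : Type*} [EquivLike F M M] [AddEquivClass F M M] (hP : IsPositiveSystem R P)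
    (u : F) : IsPositiveSystem (u '' R) (u '' P) where
  closed := by
    rintro _ ⟨α, hα, rfl⟩ _ ⟨β, hβ, rfl⟩ hαβ
    rw [← map_add] at hαβ ⊢
    exact Set.mem_image_of_mem u
      (hP.closed α hα β hβ ((EquivLike.injective u).mem_set_image.1 hαβ))
  union_neg := by rw [← Set.image_neg, ← Set.image_union, hP.union_neg]
  inter_neg := by
    rw [← Set.image_neg, ← Set.image_inter (EquivLike.injective u), hP.inter_neg, Set.image_empty]

end IsPositiveSystem

end PositiveSystem

section Existence

variable {Φ Δ L : Set V} {s : V → V ≃ₗ[ℝ] V}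

theorem isPositiveSystem_posRoots (hΦ : IsRootSystem Φ) (hΔ : IsBase Φ Δ) :
    IsPositiveSystem Φ (posRoots Φ Δ) where
  closed _ hα _ hβ hαβ := ⟨hαβ, hα.2.add hβ.2⟩
  union_neg := by
    rw [hΦ.neg_posRoots Δ]
    exact Set.Subset.antisymm (Set.union_subset (fun _ h => h.1) fun _ h => h.1)
      fun _ h => hΔ.mem_posRoots_or_mem_negRoots h
  inter_neg := by
    rw [hΦ.neg_posRoots Δ]
    exact (hΔ.disjoint_posRoots_negRoots hΦ).inter_eq

theorem isPositiveSystem_posRootsIn (hΦ : IsRootSystem Φ) (hΔ : IsBase Φ Δ) (L : Set V) :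
    IsPositiveSystem (rootsIn Φ L) (posRootsIn Φ Δ L) := by
  rw [posRootsIn, Set.inter_comm]
  exact (isPositiveSystem_posRoots hΦ hΔ).inter Set.inter_subset_left (hΦ.neg_rootsIn L)

theorem isPositiveSystem_image_posRoots_inter (hΦ : IsRootSystem Φ) (hΔ : IsBase Φ Δ)
    (hs : IsReflectionFamily Φ s) {w : V ≃ₗ[ℝ] V} (hw : w ∈ weylGroupOf Φ s) (L : Set V) :
    IsPositiveSystem (rootsIn Φ L) (w '' posRoots Φ Δ ∩ rootsIn Φ L) := by
  have hwpos := (isPositiveSystem_posRoots hΦ hΔ).image w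
  rw [image_roots_of_mem_weylGroupOf hΦ hs subset_rfl hw] at hwpos
  exact hwpos.inter Set.inter_subset_left (hΦ.neg_rootsIn L)

theorem IsBase.exists_mem_inner_pos (hΔ : IsBase Φ Δ) (hΦ : IsRootSystem Φ) (hL : L ⊆ Δ)
    {β : V} (hβ : β ∈ posRootsIn Φ Δ L) : ∃ α ∈ L, 0 < ⟪β, α⟫_ℝ := by
  obtain ⟨c, hcL, hc, hβc⟩ := hΔ.isNonnegComb_of_mem_span hL hβ.2.2 hβ.1.2
  by_contra! h
  have : ⟪β, β⟫_ℝ ≤ 0 := by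
    nth_rewrite 2 [hβc]
    rw [Finsupp.sum, inner_sum]
    exact Finset.sum_nonpos fun v hv => by
      rw [real_inner_smul_right]
      exact mul_nonpos_of_nonneg_of_nonpos (hc v) (h v (hcL hv))
  exact (hΦ.inner_self_pos hβ.1.1).not_ge this

theorem IsBase.sub_mem_posRoots (hΔ : IsBase Φ Δ) (hΦ : IsRootSystem Φ) {α β : V} (hα : α ∈ Δ)
    (hβ : β ∈ posRoots Φ Δ) (hpos : 0 < ⟪β, α⟫_ℝ) (hne : β ≠ α) : β - α ∈ posRoots Φ Δ :=
  (hΔ.mem_posRoots_or_mem_negRoots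
    (hΦ.sub_mem_of_inner_pos (hΔ.subset hα) hβ.1 hpos hne)).resolve_right
    fun h => hne (hΔ.eq_of_sub_smul_mem_negRoots hΦ 1 hα hβ (by rwa [one_smul]))

/-- A root `β ∈ Φ_L⁺` of minimal height with `-β ∈ D` is simple: otherwise some `α ∈ L` has
`⟪β, α⟫ > 0`, so `β - α ∈ Φ_L⁺` has smaller height, and closedness of `D` puts `-(β - α)` in `D`
unless `-α ∈ D`. -/
theorem IsPositiveSystem.exists_neg_mem_of_mem_negRoots (hΦ : IsRootSystem Φ) (hΔ : IsBase Φ Δ)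
    (hL : L ⊆ Δ) {D : Set V} (hD : IsPositiveSystem (rootsIn Φ L) D) {γ : V} (hγD : γ ∈ D)
    (hγ : γ ∈ negRoots Φ Δ) : ∃ α ∈ L, -α ∈ D := by
  obtain ⟨f, hf⟩ := hΔ.exists_height
  let S := {β | β ∈ posRootsIn Φ Δ L ∧ -β ∈ D}
  have hSfin : S.Finite := hΦ.finite.subset fun _ hβ => hβ.1.1.1
  have hSne : S.Nonempty :=
    ⟨-γ, ⟨hΦ.neg_mem_rootsIn (hD.subset hγD), (hΦ.neg_posRoots Δ).ge hγ⟩, by rwa [neg_neg]⟩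
  obtain ⟨β, ⟨hβ, hβD⟩, hmin⟩ := S.exists_min_image f hSfin hSne
  obtain ⟨α, hαL, hβα⟩ := hΔ.exists_mem_inner_pos hΦ hL hβ
  by_cases hne : β = α
  · exact ⟨α, hαL, hne ▸ hβD⟩
  have hαR : α ∈ rootsIn Φ L := (hΔ.mem_posRootsIn hL hαL).1
  refine ⟨α, hαL, (hD.mem_or_neg_mem hαR).resolve_left fun hαD => ?_⟩
  have hsubpos := hΔ.sub_mem_posRoots hΦ (hL hαL) hβ.2 hβα hne
  have hsub : β - α ∈ posRootsIn Φ Δ L := ⟨⟨hsubpos.1, sub_mem hβ.1.2 hαR.2⟩, hsubpos⟩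
  have hsubD : -(β - α) ∈ D := by
    have := hD.closed _ hβD _ hαD
      (by rw [neg_add_eq_sub, ← neg_sub]; exact hΦ.neg_mem_rootsIn hsub.1)
    rwa [neg_add_eq_sub, ← neg_sub] at this
  have := hmin _ ⟨hsub, hsubD⟩
  rw [map_sub, hf α (hL hαL)] at this
  linarith

theorem ncard_image_reflection_inter_negRoots_lt (hΦ : IsRootSystem Φ) (hΔ : IsBase Φ Δ)
    (hs : IsReflectionFamily Φ s) {α : V} (hα : α ∈ Δ) {D : Set V} (hDΦ : D ⊆ Φ) (hαD : α ∉ D)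
    (hnαD : -α ∈ D) : (s α '' D ∩ negRoots Φ Δ).ncard < (D ∩ negRoots Φ Δ).ncard := by
  have hαpos := hΔ.mem_posRoots hα
  have hdisj := Set.disjoint_left.1 (hΔ.disjoint_posRoots_negRoots hΦ)
  have hfin : (D ∩ negRoots Φ Δ).Finite := hΦ.finite.subset fun _ hx => hDΦ hx.1
  have hsub : s α '' D ∩ negRoots Φ Δ ⊆ s α '' ((D ∩ negRoots Φ Δ) \ {-α}) := by
    rintro _ ⟨⟨y, hyD, rfl⟩, hneg⟩
    have hyα : y ≠ -α := by
      rintro rfl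
      rw [map_neg, hs.apply_self hΦ (hΔ.subset hα), neg_neg] at hneg
      exact hdisj hαpos hneg
    refine ⟨y, ⟨⟨hyD, (hΔ.mem_posRoots_or_mem_negRoots (hDΦ hyD)).resolve_left fun hpos => ?_⟩,
      hyα⟩, rfl⟩
    exact hdisj (hs.apply_mem_posRoots hΦ hΔ hα hpos (by rintro rfl; exact hαD hyD)) hneg
  calc (s α '' D ∩ negRoots Φ Δ).ncard
      ≤ (s α '' ((D ∩ negRoots Φ Δ) \ {-α})).ncard :=
        Set.ncard_le_ncard hsub (hfin.sdiff.image _)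
    _ = ((D ∩ negRoots Φ Δ) \ {-α}).ncard := Set.ncard_image_of_injective _ (s α).injective
    _ < (D ∩ negRoots Φ Δ).ncard :=
      Set.ncard_sdiff_singleton_lt_of_mem
        ⟨hnαD, (hΦ.neg_posRoots Δ).le (by rwa [Set.mem_neg, neg_neg])⟩ hfin

theorem IsPositiveSystem.exists_image_eq_posRootsIn (hΦ : IsRootSystem Φ) (hΔ : IsBase Φ Δ)
    (hs : IsReflectionFamily Φ s) (hL : L ⊆ Δ) {D : Set V}
    (hD : IsPositiveSystem (rootsIn Φ L) D) :
    ∃ u ∈ weylGroupOf L s, u '' D = posRootsIn Φ Δ L := by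
  induction hn : (D ∩ negRoots Φ Δ).ncard using Nat.strong_induction_on generalizing D with
  | _ n ih =>
  rcases (D ∩ negRoots Φ Δ).eq_empty_or_nonempty with hemp | ⟨γ, hγD, hγ⟩
  · refine ⟨1, one_mem _, ?_⟩
    rw [LinearEquiv.coe_one, Set.image_id]
    refine hD.eq_of_subset (isPositiveSystem_posRootsIn hΦ hΔ L) fun x hx => ⟨hD.subset hx, ?_⟩
    exact (hΔ.mem_posRoots_or_mem_negRoots (hD.subset hx).1).resolve_right
      fun h => Set.eq_empty_iff_forall_notMem.1 hemp x ⟨hx, h⟩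
  obtain ⟨α, hαL, hαD⟩ := hD.exists_neg_mem_of_mem_negRoots hΦ hΔ hL hγD hγ
  have hαR : α ∈ rootsIn Φ L := (hΔ.mem_posRootsIn hL hαL).1
  have hD' : IsPositiveSystem (rootsIn Φ L) (s α '' D) := by
    simpa only [hs.image_rootsIn hΦ hαR] using hD.image (s α)
  have hlt := ncard_image_reflection_inter_negRoots_lt hΦ hΔ hs (hL hαL)
    (fun _ h => (hD.subset h).1) (fun h => hD.neg_notMem hαD (by rwa [neg_neg])) hαD
  obtain ⟨u, hu, huD⟩ := ih _ (hn ▸ hlt) hD' rfl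
  exact ⟨u * s α, mul_mem hu (Subgroup.subset_closure ⟨α, hαL, rfl⟩), by
    rw [LinearEquiv.image_mul, huD]⟩

end Existence

section Uniqueness

variable {Φ Δ : Set V} {s : V → V ≃ₗ[ℝ] V}

theorem exists_split_of_mem_negRoots (hΦ : IsRootSystem Φ) (hΔ : IsBase Φ Δ)
    (hs : IsReflectionFamily Φ s) {a : V} (ha : a ∈ posRoots Φ Δ) :
    ∀ {l : List V}, (∀ b ∈ l, b ∈ Δ) → (l.map s).prod a ∈ negRoots Φ Δ →
      ∃ l₁ c l₂, l = l₁ ++ c :: l₂ ∧ (l₂.map s).prod a = c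
  | [], _, hneg => absurd hneg (Set.disjoint_left.1 (hΔ.disjoint_posRoots_negRoots hΦ) ha)
  | b :: l, hl, hneg => by
    have hlΔ : ∀ x ∈ l, x ∈ Δ := fun x hx => hl x (List.mem_cons_of_mem b hx)
    by_cases h : (l.map s).prod a ∈ negRoots Φ Δ
    · obtain ⟨l₁, c, l₂, rfl, hc⟩ := exists_split_of_mem_negRoots hΦ hΔ hs ha hlΔ h
      exact ⟨b :: l₁, c, l₂, rfl, hc⟩
    have hroot : (l.map s).prod a ∈ Φ := by
      rw [← image_roots_of_mem_weylGroupOf hΦ hs hΔ.subset (list_prod_mem_weylGroupOf hlΔ)]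
      exact Set.mem_image_of_mem _ ha.1
    have hpos := (hΔ.mem_posRoots_or_mem_negRoots hroot).resolve_right h
    refine ⟨[], b, l, rfl, by_contra fun hne => ?_⟩
    have := hs.apply_mem_posRoots hΦ hΔ (hl b List.mem_cons_self) hpos hne
    exact Set.disjoint_left.1 (hΔ.disjoint_posRoots_negRoots hΦ) this (by simpa using hneg)

theorem list_prod_eq_one_of_forall_mem_posRoots (hΦ : IsRootSystem Φ) (hΔ : IsBase Φ Δ)
    (hs : IsReflectionFamily Φ s) (l : List V) (hlΔ : ∀ b ∈ l, b ∈ Δ)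
    (hpos : ∀ b ∈ l, (l.map s).prod b ∈ posRoots Φ Δ) : (l.map s).prod = 1 := by
  induction hn : l.length using Nat.strong_induction_on generalizing l with
  | _ n ih =>
  rcases l.eq_nil_or_concat with rfl | ⟨m, a, rfl⟩
  · rfl
  simp only [List.concat_eq_append] at hlΔ hpos hn ⊢
  have haΔ : a ∈ Δ := hlΔ a (by simp)
  have hmΔ : ∀ b ∈ m, b ∈ Δ := fun b hb => hlΔ b (by simp [hb])
  have hma : (m.map s).prod a ∈ negRoots Φ Δ := by
    have := hpos a (by simp)
    simp only [List.map_append, List.map_cons, List.map_nil,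
      List.prod_append, List.prod_cons, List.prod_nil, mul_one, LinearEquiv.mul_apply,
      hs.apply_self hΦ (hΔ.subset haΔ), map_neg] at this
    exact hΦ.neg_posRoots Δ ▸ this
  obtain ⟨m₁, c, m₂, rfl, hc⟩ :=
    exists_split_of_mem_negRoots hΦ hΔ hs (hΔ.mem_posRoots haΔ) hmΔ hma
  have hm₂ : ∀ b ∈ m₂, b ∈ Δ := fun b hb => hmΔ b (by simp [hb])
  -- `s c` is the conjugate of `s a` by the tail `m₂`, so `s c` and `s a` cancel.
  have hconj : (m₂.map s).prod * s a * ((m₂.map s).prod)⁻¹ = s c := hc ▸ hs.conj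
    (inner_map_map_of_mem_weylGroupOf hΦ hs hΔ.subset (list_prod_mem_weylGroupOf hm₂))
    (hΔ.subset haΔ) (hc ▸ hΔ.subset (hmΔ c (by simp)))
  have hshort : ((m₁ ++ c :: m₂ ++ [a]).map s).prod = ((m₁ ++ m₂).map s).prod := by
    simp only [List.map_append, List.map_cons, List.map_nil,
      List.prod_append, List.prod_cons, List.prod_nil, mul_one, ← hconj]
    simp [mul_assoc, hs.mul_self hΦ (hΔ.subset haΔ)]
  rw [hshort]
  refine ih (m₁ ++ m₂).length (by simp at hn ⊢; omega) _
    (fun b hb => hmΔ b (by simp at hb ⊢; tauto)) (fun b hb => ?_) rfl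
  rw [← hshort]
  exact hpos b (by simp at hb ⊢; tauto)

theorem eq_one_of_mapsTo_posRootsIn (hΦ : IsRootSystem Φ) (hΔ : IsBase Φ Δ)
    (hs : IsReflectionFamily Φ s) {L : Set V} (hL : L ⊆ Δ) {u : V ≃ₗ[ℝ] V}
    (hu : u ∈ weylGroupOf L s) (hpos : Set.MapsTo u (posRootsIn Φ Δ L) (posRootsIn Φ Δ L)) :
    u = 1 := by
  obtain ⟨l, hlL, rfl⟩ := exists_list_of_mem_weylGroupOf hΦ hs (hL.trans hΔ.subset) hu
  exact list_prod_eq_one_of_forall_mem_posRoots hΦ hΔ hs l (fun b hb => hL (hlL b hb))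
    fun b hb => (hpos (hΔ.mem_posRootsIn hL (hlL b hb))).2

theorem eq_of_image_eq_posRootsIn (hΦ : IsRootSystem Φ) (hΔ : IsBase Φ Δ)
    (hs : IsReflectionFamily Φ s) {L : Set V} (hL : L ⊆ Δ) {D : Set V} {u v : V ≃ₗ[ℝ] V}
    (hu : u ∈ weylGroupOf L s) (hv : v ∈ weylGroupOf L s) (huD : u '' D = posRootsIn Φ Δ L)
    (hvD : v '' D = posRootsIn Φ Δ L) : v = u := by
  refine mul_inv_eq_one.1 (eq_one_of_mapsTo_posRootsIn hΦ hΔ hs hL (mul_mem hv (inv_mem hu)) ?_)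
  intro y hy
  rw [← huD] at hy
  obtain ⟨x, hx, rfl⟩ := hy
  rw [← hvD]
  exact ⟨x, hx, congrArg v (u.symm_apply_apply x).symm⟩

end Uniqueness

theorem statement11_general (Φ Δ : Set V) (hΦ : IsRootSystem Φ) (hΔ : IsBase Φ Δ)
    (s : V → V ≃ₗ[ℝ] V) (hs : IsReflectionFamily Φ s)
    (I L : Set V) (hL : L ⊆ Δ)
    (w : V ≃ₗ[ℝ] V) (hw : w ∈ weylGroupOf Φ s)
    (hfree : ⇑w⁻¹ '' rootsIn Φ L ∩ rootsIn Φ I = ∅) :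
    IsClosedSubset (rootsIn Φ L) (⇑w '' (posRoots Φ Δ \ rootsIn Φ I) ∩ rootsIn Φ L) ∧
    (⇑w '' (posRoots Φ Δ \ rootsIn Φ I) ∩ rootsIn Φ L) ∪
      ((fun α => -α) '' (⇑w '' (posRoots Φ Δ \ rootsIn Φ I) ∩ rootsIn Φ L)) =
        rootsIn Φ L ∧
    (⇑w '' (posRoots Φ Δ \ rootsIn Φ I) ∩ rootsIn Φ L) ∩
      ((fun α => -α) '' (⇑w '' (posRoots Φ Δ \ rootsIn Φ I) ∩ rootsIn Φ L)) = ∅ ∧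
    (∃! w' : V ≃ₗ[ℝ] V, w' ∈ weylGroupOf L s ∧
      ⇑w' '' (⇑w '' (posRoots Φ Δ \ rootsIn Φ I) ∩ rootsIn Φ L) = posRootsIn Φ Δ L) := by
  have hC : ⇑w '' (posRoots Φ Δ \ rootsIn Φ I) ∩ rootsIn Φ L =
      ⇑w '' posRoots Φ Δ ∩ rootsIn Φ L := by
    refine Set.inter_subset_inter_left _ (Set.image_mono Set.sdiff_subset) |>.antisymm ?_
    rintro _ ⟨⟨β, hβ, rfl⟩, hwβ⟩
    refine ⟨⟨β, ⟨hβ, fun hβI => ?_⟩, rfl⟩, hwβ⟩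
    have : β ∈ ⇑w⁻¹ '' rootsIn Φ L ∩ rootsIn Φ I := ⟨⟨w β, hwβ, w.symm_apply_apply β⟩, hβI⟩
    rwa [hfree] at this
  have hCpos := hC ▸ isPositiveSystem_image_posRoots_inter hΦ hΔ hs hw L
  obtain ⟨w', hw'L, hw'C⟩ := hCpos.exists_image_eq_posRootsIn hΦ hΔ hs hL
  refine ⟨hCpos.closed, ?_, ?_, w', ⟨hw'L, hw'C⟩, fun v ⟨hvL, hvC⟩ =>
    eq_of_image_eq_posRootsIn hΦ hΔ hs hL hw'L hvL hw'C hvC⟩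
  · rw [Set.image_neg_eq_neg]
    exact hCpos.union_neg
  · rw [Set.image_neg_eq_neg]
    exact hCpos.inter_neg

/-- For `I, L ⊆ Π` and `w ∈ W` with `w⁻¹(Φ_L) ∩ Φ_I = ∅`, the set
`C := w(Φ⁺ \ Φ_I) ∩ Φ_L` is a closed subset of `Φ_L` whose union with its negative is a
partition of `Φ_L`, and there exists a unique `w' ∈ W_L` with `w'(C) = Φ_L⁺`. -/
theorem statement11 (Φ Δ : Set V) (hΦ : IsRootSystem Φ) (hΔ : IsBase Φ Δ)
    (s : V → V ≃ₗ[ℝ] V) (hs : IsReflectionFamily Φ s)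
    (I L : Set V) (hI : I ⊆ Δ) (hL : L ⊆ Δ)
    (w : V ≃ₗ[ℝ] V) (hw : w ∈ weylGroupOf Φ s)
    (hfree : ⇑w⁻¹ '' rootsIn Φ L ∩ rootsIn Φ I = ∅) :
    IsClosedSubset (rootsIn Φ L) (⇑w '' (posRoots Φ Δ \ rootsIn Φ I) ∩ rootsIn Φ L) ∧
    (⇑w '' (posRoots Φ Δ \ rootsIn Φ I) ∩ rootsIn Φ L) ∪
      ((fun α => -α) '' (⇑w '' (posRoots Φ Δ \ rootsIn Φ I) ∩ rootsIn Φ L)) =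
        rootsIn Φ L ∧
    (⇑w '' (posRoots Φ Δ \ rootsIn Φ I) ∩ rootsIn Φ L) ∩
      ((fun α => -α) '' (⇑w '' (posRoots Φ Δ \ rootsIn Φ I) ∩ rootsIn Φ L)) = ∅ ∧
    (∃! w' : V ≃ₗ[ℝ] V, w' ∈ weylGroupOf L s ∧
      ⇑w' '' (⇑w '' (posRoots Φ Δ \ rootsIn Φ I) ∩ rootsIn Φ L) = posRootsIn Φ Δ L) :=
  statement11_general Φ Δ hΦ hΔ s hs I L hL w hw hfree
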